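/- In the Q-MAC setup, for any decoder g : ((ZMod 2)²)ⁿ → C₁ × C₂, if ε = P[g(Y) ≠ (X⁽¹⁾, X⁽²⁾)], then (1 − ε) · (log |C₁| + log |C₂|) ≤ n · (2·log 2 − H_P) + log 2, where H_P is the Shannon entropy of the noise distribution P. (This is the finite-blocklength form of the necessary sum-rate condition R₁ + R₂ ≤ I[(X₀⁽¹⁾, X₀⁽²⁾); Y₀].) -/

import Mathlib

open MeasureTheory

/-- Shannon entropy (in nats) of a random variable `X` taking values in a finite type,
`H[X] = ∑ s, (-P[X = s]) * log P[X = s]`. -/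
noncomputable def entropy {Ω S : Type*} [MeasurableSpace Ω] [Fintype S]
    (μ : Measure Ω) (X : Ω → S) : ℝ :=
  ∑ s : S, Real.negMulLog (μ (X ⁻¹' {s})).toReal

/-- Conditional Shannon entropy (in nats), `H[X | Z] = H[(X, Z)] - H[Z]` (chain rule). -/
noncomputable def condEntropy {Ω S T : Type*} [MeasurableSpace Ω] [Fintype S] [Fintype T]
    (μ : Measure Ω) (X : Ω → S) (Z : Ω → T) : ℝ :=
  entropy μ (fun ω => (X ω, Z ω)) - entropy μ Z

/-- Shannon entropy (in nats) of a probability distribution on a finite type. -/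
noncomputable def distEntropy {S : Type*} [Fintype S] (P : PMF S) : ℝ :=
  ∑ s : S, Real.negMulLog (P s).toReal

/-!
Fano's inequality. Let `N = |C₁||C₂|` and let `q` be the law of `Δ`. The message
`X = (X⁽¹⁾, X⁽²⁾)` is uniform and `Y = X + Δ`, so `H[X, Y] = log N + n H_P` while
`H[Y] ≤ n log 4`. For each output `y`, separating the joint mass `p(g y, y)` of the decoded message
from the others bounds `∑ₓ -p(x, y) log p(x, y)` by
`-p(y) log p(y) + p(y) log 2 + P[X ≠ g y, Y = y] log N`; summing over `y` gives
`log N + n H_P ≤ n log 4 + log 2 + ε log N`.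
-/

open Real Finset

theorem sum_negMulLog_le {ι : Type*} (t : Finset ι) {w : ι → ℝ} (hw : ∀ i ∈ t, 0 ≤ w i) :
    ∑ i ∈ t, negMulLog (w i) ≤ negMulLog (∑ i ∈ t, w i) + (∑ i ∈ t, w i) * log #t := by
  rcases t.eq_empty_or_nonempty with rfl | ht
  · simp
  have hk : (0 : ℝ) < #t := by exact_mod_cast ht.card_pos
  have hjensen := concaveOn_negMulLog.le_map_sum (t := t) (w := fun _ => (#t : ℝ)⁻¹) (p := w)
    (fun _ _ => by positivity) (by simp [hk.ne']) (fun i hi => Set.mem_Ici.2 (hw i hi))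
  simp only [smul_eq_mul, ← Finset.mul_sum] at hjensen
  calc ∑ i ∈ t, negMulLog (w i) ≤ #t * negMulLog ((#t : ℝ)⁻¹ * ∑ i ∈ t, w i) :=
        (inv_mul_le_iff₀ hk).1 hjensen
    _ = _ := by
        rw [negMulLog_mul]
        simp only [negMulLog, log_inv]
        field_simp
        ring

theorem negMulLog_add_negMulLog_le {a b : ℝ} (ha : 0 ≤ a) (hb : 0 ≤ b) :
    negMulLog a + negMulLog b ≤ negMulLog (a + b) + (a + b) * log 2 := by
  simpa [Fin.sum_univ_two] using
    sum_negMulLog_le (univ : Finset (Fin 2)) (w := ![a, b]) (by simp [Fin.forall_fin_two, ha, hb])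

theorem sum_negMulLog_le_fano {ι : Type*} [Fintype ι] [DecidableEq ι] {w : ι → ℝ}
    (hw : ∀ i, 0 ≤ w i) (a : ι) :
    ∑ i, negMulLog (w i) ≤ negMulLog (∑ i, w i) + (∑ i, w i) * log 2
      + (∑ i, w i - w a) * log (Fintype.card ι) := by
  have hsplit : ∀ f : ι → ℝ, ∑ i, f i = f a + ∑ i ∈ univ.erase a, f i := fun f =>
    (add_sum_erase _ f (mem_univ a)).symm
  have hupdate : ∀ f : ℝ → ℝ, f 0 = 0 →
      ∑ i, f (Function.update w a 0 i) = ∑ i ∈ univ.erase a, f (w i) := by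
    intro f hf
    rw [hsplit, Function.update_self, hf, zero_add]
    exact sum_congr rfl fun i hi => by rw [Function.update_of_ne (ne_of_mem_erase hi)]
  have hrest := sum_negMulLog_le univ (w := Function.update w a 0)
    (fun i _ => by rcases eq_or_ne i a with rfl | h <;> simp [*])
  have hmass : ∑ i, Function.update w a 0 i = ∑ i ∈ univ.erase a, w i := hupdate id rfl
  rw [hupdate negMulLog negMulLog_zero, hmass, card_univ] at hrest
  have hpair := negMulLog_add_negMulLog_le (hw a) (sum_nonneg fun i _ => hw i :
    0 ≤ ∑ i ∈ univ.erase a, w i)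
  rw [hsplit (fun i => negMulLog (w i)), hsplit w]
  linarith

theorem sum_prod_negMulLog_mul {α β : Type*} [Fintype α] [Fintype β] (a : α → ℝ) (b : β → ℝ) :
    ∑ x : α × β, negMulLog (a x.1 * b x.2)
      = (∑ y, b y) * ∑ x, negMulLog (a x) + (∑ x, a x) * ∑ y, negMulLog (b y) := by
  simp only [Fintype.sum_prod_type, negMulLog_mul, sum_add_distrib, ← mul_sum, ← sum_mul]

theorem sum_pi_negMulLog_prod {S : Type*} [Fintype S] {p : S → ℝ} (hp : ∑ s, p s = 1) (n : ℕ) :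
    ∑ d : Fin n → S, negMulLog (∏ i, p (d i)) = n * ∑ s, negMulLog (p s) := by
  induction n with
  | zero => simp
  | succ n ih =>
    have hcons : ∑ d : Fin (n + 1) → S, negMulLog (∏ i, p (d i))
        = ∑ x : S × (Fin n → S), negMulLog (p x.1 * ∏ i, p (x.2 i)) := by
      refine (Fintype.sum_equiv (Fin.consEquiv fun _ => S) _ _ fun x => ?_).symm
      simp [Fin.consEquiv, Fin.prod_univ_succ]
    rw [hcons, sum_prod_negMulLog_mul p fun t : Fin n → S => ∏ i, p (t i), ih,
      ← Fintype.sum_pow, hp]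
    push_cast
    ring

theorem PMF.sum_toReal_eq_one {S : Type*} [Fintype S] (P : PMF S) : ∑ s, (P s).toReal = 1 := by
  rw [← ENNReal.toReal_sum fun s _ => P.apply_ne_top s, ← tsum_fintype (L := .unconditional _),
    P.tsum_coe, ENNReal.toReal_one]

section Channel

variable {G D : Type*} [Fintype G] [Fintype D] [DecidableEq G]

/-- Probability that `dec` recovers a uniform message `x : G` sent as `shift x d`, where the
noise `d` has law `q`. -/
noncomputable def successProb (q : D → ℝ) (shift : G → D ≃ D) (dec : D → G) : ℝ :=
  ∑ x, ∑ d, if dec (shift x d) = x then (Fintype.card G : ℝ)⁻¹ * q d else 0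

theorem successProb_eq_sum (q : D → ℝ) (shift : G → D ≃ D) (dec : D → G) :
    successProb q shift dec = ∑ y, (Fintype.card G : ℝ)⁻¹ * q ((shift (dec y)).symm y) := by
  have hreindex : ∀ x, (∑ d, if dec (shift x d) = x then (Fintype.card G : ℝ)⁻¹ * q d else 0)
      = ∑ y, if dec y = x then (Fintype.card G : ℝ)⁻¹ * q ((shift x).symm y) else 0 := fun x =>
    Fintype.sum_equiv (shift x) _ _ fun d => by simp
  simp only [successProb, hreindex]
  rw [sum_comm]
  simp

theorem successProb_mul_log_card_le [Nonempty G] {q : D → ℝ} (hq0 : ∀ d, 0 ≤ q d)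
    (hq1 : ∑ d, q d = 1) (shift : G → D ≃ D) (dec : D → G) :
    successProb q shift dec * log (Fintype.card G)
      ≤ log (Fintype.card D) - ∑ d, negMulLog (q d) + log 2 := by
  set N : ℝ := (Fintype.card G : ℝ)
  have hN : 0 < N := Nat.cast_pos.2 Fintype.card_pos
  set r : G → D → ℝ := fun x y => N⁻¹ * q ((shift x).symm y)
  have hr0 : ∀ x y, 0 ≤ r x y := fun x y => mul_nonneg (by positivity) (hq0 _)
  have hrow_mass : ∀ x, ∑ y, r x y = N⁻¹ := fun x => by
    rw [← mul_sum, Equiv.sum_comp (shift x).symm q, hq1, mul_one]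
  have hrow_entropy : ∀ x, ∑ y, negMulLog (r x y) = negMulLog N⁻¹ + N⁻¹ * ∑ d, negMulLog (q d) :=
    fun x => by
      rw [Equiv.sum_comp (shift x).symm fun d => negMulLog (N⁻¹ * q d)]
      simp only [negMulLog_mul, sum_add_distrib, ← sum_mul, ← mul_sum, hq1, one_mul]
  set m : D → ℝ := fun y => ∑ x, r x y
  have hm1 : ∑ y, m y = 1 := by
    simp only [m]
    rw [sum_comm]
    simp [hrow_mass, N, hN.ne']
  have hjoint : ∑ y, ∑ x, negMulLog (r x y) = log N + ∑ d, negMulLog (q d) := by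
    rw [sum_comm]
    simp only [hrow_entropy, sum_add_distrib, sum_const, card_univ, nsmul_eq_mul]
    simp only [negMulLog, log_inv]
    field_simp
    ring
  have hfano : ∀ y, ∑ x, negMulLog (r x y)
      ≤ negMulLog (m y) + m y * log 2 + (m y - r (dec y) y) * log N := fun y =>
    sum_negMulLog_le_fano (fun x => hr0 x y) (dec y)
  have houtput : ∑ y, negMulLog (m y) ≤ log (Fintype.card D) := by
    simpa [hm1] using sum_negMulLog_le univ (w := m) fun y _ => sum_nonneg fun x _ => hr0 x y
  have hsucc : successProb q shift dec = ∑ y, r (dec y) y := successProb_eq_sum q shift dec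
  have hsum := sum_le_sum fun y (_ : y ∈ univ) => hfano y
  simp only [sum_add_distrib, ← sum_mul, sum_sub_distrib, hm1, hjoint, ← hsucc] at hsum
  linarith

theorem one_sub_measureReal_le_successProb {Ω : Type*} [MeasurableSpace Ω] (μ : Measure Ω)
    [IsProbabilityMeasure μ] {q : D → ℝ} {shift : G → D ≃ D} {dec : D → G} {X : Ω → G}
    {Δ Y : Ω → D} (hlaw : ∀ x d, μ.real {ω | X ω = x ∧ Δ ω = d} = (Fintype.card G : ℝ)⁻¹ * q d)
    (hY : ∀ ω, Y ω = shift (X ω) (Δ ω)) :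
    1 - μ.real {ω | dec (Y ω) ≠ X ω} ≤ successProb q shift dec := by
  set good := univ.filter fun v : G × D => dec (shift v.1 v.2) = v.1
  have hcover : {ω | dec (Y ω) = X ω} ⊆ ⋃ v ∈ good, {ω | X ω = v.1 ∧ Δ ω = v.2} := fun ω hω => by
    simp only [Set.mem_iUnion]
    exact ⟨(X ω, Δ ω), by simpa [good, hY] using hω, rfl, rfl⟩
  have herror : 1 ≤ μ.real {ω | dec (Y ω) ≠ X ω} + μ.real {ω | dec (Y ω) = X ω} := by
    rw [← probReal_univ (μ := μ)]
    refine (measureReal_mono fun ω _ => ?_).trans (measureReal_union_le _ _)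
    exact em' (dec (Y ω) = X ω)
  have hcorrect : μ.real {ω | dec (Y ω) = X ω} ≤ successProb q shift dec :=
    calc _ ≤ ∑ v ∈ good, μ.real {ω | X ω = v.1 ∧ Δ ω = v.2} :=
          (measureReal_mono hcover (measure_ne_top μ _)).trans (measureReal_biUnion_finset_le _ _)
      _ = successProb q shift dec := by
          simp only [good, sum_filter, hlaw, successProb, Fintype.sum_prod_type]
  linarith

end Channel

theorem measureReal_codeword_noise_eq {Ω : Type*} [MeasurableSpace Ω] (μ : Measure Ω)
    {n : ℕ} (P : PMF (ZMod 2 × ZMod 2)) {C₁ C₂ : Submodule (ZMod 2) (Fin n → ZMod 2)}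
    [Fintype C₁] [Fintype C₂] {X1 X2 : Ω → Fin n → ZMod 2} {Δ : Ω → Fin n → ZMod 2 × ZMod 2}
    (hX1mem : ∀ ω, X1 ω ∈ C₁) (hX2mem : ∀ ω, X2 ω ∈ C₂)
    (hX1 : ∀ c ∈ C₁, μ (X1 ⁻¹' {c}) = (Nat.card C₁ : ENNReal)⁻¹)
    (hX2 : ∀ c ∈ C₂, μ (X2 ⁻¹' {c}) = (Nat.card C₂ : ENNReal)⁻¹)
    (hΔ : ∀ d, μ (Δ ⁻¹' {d}) = ∏ i, P (d i))
    (hindep : ∀ c₁ c₂ d, μ {ω | X1 ω = c₁ ∧ X2 ω = c₂ ∧ Δ ω = d}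
      = μ (X1 ⁻¹' {c₁}) * μ (X2 ⁻¹' {c₂}) * μ (Δ ⁻¹' {d}))
    (x : C₁ × C₂) (d : Fin n → ZMod 2 × ZMod 2) :
    μ.real {ω | ((⟨X1 ω, hX1mem ω⟩, ⟨X2 ω, hX2mem ω⟩) : C₁ × C₂) = x ∧ Δ ω = d}
      = (Fintype.card (C₁ × C₂) : ℝ)⁻¹ * ∏ i, (P (d i)).toReal := by
  have hset : {ω | ((⟨X1 ω, hX1mem ω⟩, ⟨X2 ω, hX2mem ω⟩) : C₁ × C₂) = x ∧ Δ ω = d}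
      = {ω | X1 ω = x.1 ∧ X2 ω = x.2 ∧ Δ ω = d} := by
    ext ω
    simp [Prod.ext_iff, Subtype.ext_iff, and_assoc]
  rw [measureReal_def, hset, hindep, hX1 _ x.1.2, hX2 _ x.2.2, hΔ]
  simp [ENNReal.toReal_prod, Fintype.card_prod, Nat.card_eq_fintype_card, mul_comm]

theorem stmt_12 {Ω : Type*} [MeasurableSpace Ω] (μ : Measure Ω) [IsProbabilityMeasure μ]
    (n : ℕ) (P : PMF (ZMod 2 × ZMod 2))
    (C₁ C₂ : Submodule (ZMod 2) (Fin n → ZMod 2))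
    (X1 X2 : Ω → Fin n → ZMod 2) (Δ : Ω → Fin n → ZMod 2 × ZMod 2)
    (Y : Ω → Fin n → ZMod 2 × ZMod 2)
    (hX1mem : ∀ ω, X1 ω ∈ C₁) (hX2mem : ∀ ω, X2 ω ∈ C₂)
    (hX1 : ∀ c ∈ C₁, μ (X1 ⁻¹' {c}) = (Nat.card C₁ : ENNReal)⁻¹)
    (hX2 : ∀ c ∈ C₂, μ (X2 ⁻¹' {c}) = (Nat.card C₂ : ENNReal)⁻¹)
    (hΔ : ∀ d, μ (Δ ⁻¹' {d}) = ∏ i, P (d i))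
    (hindep : ∀ c₁ c₂ d, μ {ω | X1 ω = c₁ ∧ X2 ω = c₂ ∧ Δ ω = d}
      = μ (X1 ⁻¹' {c₁}) * μ (X2 ⁻¹' {c₂}) * μ (Δ ⁻¹' {d}))
    (hY : ∀ ω i, Y ω i = (X1 ω i, X2 ω i) + Δ ω i)
    (g : (Fin n → ZMod 2 × ZMod 2) → C₁ × C₂) (ε : ℝ)
    (hε : ε = (μ {ω | g (Y ω) ≠ (⟨X1 ω, hX1mem ω⟩, ⟨X2 ω, hX2mem ω⟩)}).toReal) :
    (1 - ε) * (Real.log (Nat.card C₁) + Real.log (Nat.card C₂))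
      ≤ n * (2 * Real.log 2 - distEntropy P) + Real.log 2 := by
  classical
  let shift : C₁ × C₂ → (Fin n → ZMod 2 × ZMod 2) ≃ (Fin n → ZMod 2 × ZMod 2) := fun x =>
    Equiv.addLeft fun i => ((x.1 : Fin n → ZMod 2) i, (x.2 : Fin n → ZMod 2) i)
  have hsucc := one_sub_measureReal_le_successProb μ (shift := shift) (dec := g)
    (measureReal_codeword_noise_eq μ P hX1mem hX2mem hX1 hX2 hΔ hindep)
    (fun ω => funext (hY ω))
  have hfano := successProb_mul_log_card_le (q := fun d => ∏ i, (P (d i)).toReal)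
    (fun d => prod_nonneg fun i _ => ENNReal.toReal_nonneg)
    (by rw [← Fintype.sum_pow (fun s => (P s).toReal), P.sum_toReal_eq_one, one_pow]) shift g
  have hcodes : log (Fintype.card (C₁ × C₂)) = log (Nat.card C₁) + log (Nat.card C₂) := by
    rw [Fintype.card_prod, Nat.cast_mul, log_mul] <;> simp [Nat.card_eq_fintype_card]
  have hchannel : log (Fintype.card (Fin n → ZMod 2 × ZMod 2)) = n * (2 * log 2) := by
    rw [Fintype.card_fun, Fintype.card_prod, ZMod.card, Fintype.card_fin, Nat.cast_pow, log_pow,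
      Nat.cast_mul, log_mul (by norm_num) (by norm_num), Nat.cast_ofNat]
    ring
  rw [sum_pi_negMulLog_prod P.sum_toReal_eq_one, hcodes, hchannel] at hfano
  rw [← measureReal_def] at hε
  have hlog : 0 ≤ log (Nat.card C₁) + log (Nat.card C₂) := by positivity
  calc _ ≤ successProb _ shift g * (log (Nat.card C₁) + log (Nat.card C₂)) := by
        rw [hε]; exact mul_le_mul_of_nonneg_right hsucc hlog
    _ ≤ _ := by rw [distEntropy]; linarith
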